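/- arXiv:1106.4361 — 3 statements merged into one kernel-verified Lean document; each statement's English description precedes it below -/
import Mathlib

section
/- Let k be a positive integer, Λ a row-finite k-graph without sources, R a commutative ring with 1, and (P,S) a Kumjian-Pask Λ-family in an R-algebra A. Then for all λ, μ ∈ Λ and every q ∈ ℕ^k with q ≥ d(λ) ∨ d(μ) (pointwise maximum), S_{λ*}S_μ = Σ S_α S_{β*}, where the sum is over all pairs (α, β) with α ∈ s(λ)Λ, β ∈ s(μ)Λ, d(λα) = q and λα = μβ. -/
namespace KP

/-- A `k`-graph: a nonempty countable small category `Λ` together with a degree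
functor `d : Λ → ℕ^k` satisfying the unique factorization property.  Objects
(vertices) are identified with identity morphisms via `ident`.  The composition
`comp l m` is only meaningful when `s l = r m`. -/
structure KGraph (k : ℕ) where
  V : Type
  E : Type
  nonemptyV : Nonempty V
  countableE : Countable E
  r : E → V
  s : E → V
  d : E → Fin k → ℕ
  ident : V → E
  comp : E → E → E
  r_ident : ∀ v, r (ident v) = v
  s_ident : ∀ v, s (ident v) = v
  d_ident : ∀ v, d (ident v) = 0
  r_comp : ∀ ⦃l m : E⦄, s l = r m → r (comp l m) = r l
  s_comp : ∀ ⦃l m : E⦄, s l = r m → s (comp l m) = s m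
  d_comp : ∀ ⦃l m : E⦄, s l = r m → d (comp l m) = d l + d m
  comp_assoc : ∀ ⦃l m n : E⦄, s l = r m → s m = r n →
    comp (comp l m) n = comp l (comp m n)
  ident_comp : ∀ l : E, comp (ident (r l)) l = l
  comp_ident : ∀ l : E, comp l (ident (s l)) = l
  eq_ident_of_d_eq_zero : ∀ l : E, d l = 0 → l = ident (r l)
  factor : ∀ (l : E) (m n : Fin k → ℕ), d l = m + n →
    ∃! p : E × E, d p.1 = m ∧ d p.2 = n ∧ s p.1 = r p.2 ∧ comp p.1 p.2 = l

namespace KGraph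

variable {k : ℕ}

/-- `Λ` is row-finite if every `vΛ^n` is finite. -/
def RowFinite (Λ : KGraph k) : Prop :=
  ∀ (v : Λ.V) (n : Fin k → ℕ), {l : Λ.E | Λ.r l = v ∧ Λ.d l = n}.Finite

/-- `Λ` has no sources if every `vΛ^n` is nonempty. -/
def NoSources (Λ : KGraph k) : Prop :=
  ∀ (v : Λ.V) (n : Fin k → ℕ), ∃ l : Λ.E, Λ.r l = v ∧ Λ.d l = n

/-- `H ⊆ Λ^0` is hereditary if `r(l) ∈ H` implies `s(l) ∈ H`. -/
def HereditarySet (Λ : KGraph k) (H : Set Λ.V) : Prop :=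
  ∀ l : Λ.E, Λ.r l ∈ H → Λ.s l ∈ H

/-- `H ⊆ Λ^0` is saturated if `s(vΛ^n) ⊆ H` implies `v ∈ H`. -/
def SaturatedSet (Λ : KGraph k) (H : Set Λ.V) : Prop :=
  ∀ (v : Λ.V) (n : Fin k → ℕ),
    (∀ l : Λ.E, Λ.r l = v → Λ.d l = n → Λ.s l ∈ H) → v ∈ H

open Classical in
/-- The segment `l(p,q)` of a path `l`: the unique middle factor in a
factorization `l = l'l''l'''` with `d l' = p` and `d l'' = q - p` (when `p ≤ q ≤ d l`). -/
noncomputable def seg (Λ : KGraph k) (l : Λ.E) (p q : Fin k → ℕ) : Λ.E :=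
  if h : ∃ t : Λ.E × Λ.E × Λ.E, Λ.d t.1 = p ∧ Λ.d t.2.1 = q - p ∧
      Λ.s t.1 = Λ.r t.2.1 ∧ Λ.s t.2.1 = Λ.r t.2.2 ∧
      Λ.comp t.1 (Λ.comp t.2.1 t.2.2) = l
  then (Classical.choose h).2.1 else l

/-- Aperiodicity in the finite-path formulation of Robertson and Sims. -/
def Aperiodic (Λ : KGraph k) : Prop :=
  ∀ (v : Λ.V) (m n : Fin k → ℕ), m ≠ n →
    ∃ l : Λ.E, Λ.r l = v ∧ m ⊔ n ≤ Λ.d l ∧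
      Λ.seg l m (m + Λ.d l - m ⊔ n) ≠ Λ.seg l n (n + Λ.d l - m ⊔ n)

end KGraph

/-- An infinite path in `Λ`: a degree-preserving functor `x : Ω_k → Λ`,
recorded by its segments `x.f p q = x(p,q)` for `p ≤ q`. -/
structure InfPath {k : ℕ} (Λ : KGraph k) where
  f : (Fin k → ℕ) → (Fin k → ℕ) → Λ.E
  deg : ∀ p q : Fin k → ℕ, p ≤ q → Λ.d (f p q) = q - p
  compat : ∀ p q u : Fin k → ℕ, p ≤ q → q ≤ u → Λ.s (f p q) = Λ.r (f q u)
  comp_f : ∀ p q u : Fin k → ℕ, p ≤ q → q ≤ u → Λ.comp (f p q) (f q u) = f p u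

/-- The vertex `x(n)` of an infinite path. -/
def InfPath.vtx {k : ℕ} {Λ : KGraph k} (x : InfPath Λ) (n : Fin k → ℕ) : Λ.V :=
  Λ.r (x.f n n)

/-- `Λ` is cofinal if for every infinite path `x` and vertex `v` there is `n`
with `vΛx(n)` nonempty. -/
def KGraph.Cofinal {k : ℕ} (Λ : KGraph k) : Prop :=
  ∀ (x : InfPath Λ) (v : Λ.V), ∃ (n : Fin k → ℕ) (l : Λ.E),
    Λ.r l = v ∧ Λ.s l = x.vtx n

/-- A Kumjian-Pask `Λ`-family in a ring `A`.  `P v = P_v`, `S l = S_l` and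
`S' l = S_{l*}`; by convention `S` and `S'` are extended to vertices (paths of
degree `0`) by `S_v = S_{v*} = P_v`. -/
structure KPFamily {k : ℕ} (Λ : KGraph k) (A : Type) [Ring A] where
  P : Λ.V → A
  S : Λ.E → A
  S' : Λ.E → A
  S_ident : ∀ v, S (Λ.ident v) = P v
  S'_ident : ∀ v, S' (Λ.ident v) = P v
  idem : ∀ v, P v * P v = P v
  orth : ∀ v w, v ≠ w → P v * P w = 0
  mul_S : ∀ ⦃l m : Λ.E⦄, Λ.d l ≠ 0 → Λ.d m ≠ 0 → Λ.s l = Λ.r m →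
    S l * S m = S (Λ.comp l m)
  mul_S' : ∀ ⦃l m : Λ.E⦄, Λ.d l ≠ 0 → Λ.d m ≠ 0 → Λ.s l = Λ.r m →
    S' m * S' l = S' (Λ.comp l m)
  P_mul_S : ∀ l : Λ.E, Λ.d l ≠ 0 → P (Λ.r l) * S l = S l
  S_mul_P : ∀ l : Λ.E, Λ.d l ≠ 0 → S l * P (Λ.s l) = S l
  P_mul_S' : ∀ l : Λ.E, Λ.d l ≠ 0 → P (Λ.s l) * S' l = S' l
  S'_mul_P : ∀ l : Λ.E, Λ.d l ≠ 0 → S' l * P (Λ.r l) = S' l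
  KP3_eq : ∀ l : Λ.E, Λ.d l ≠ 0 → S' l * S l = P (Λ.s l)
  KP3_ne : ∀ l m : Λ.E, Λ.d l ≠ 0 → Λ.d l = Λ.d m → l ≠ m → S' l * S m = 0
  KP4 : ∀ (v : Λ.V) (n : Fin k → ℕ), n ≠ 0 → ∀ F : Finset Λ.E,
    (∀ l : Λ.E, l ∈ F ↔ Λ.r l = v ∧ Λ.d l = n) →
    P v = ∑ l ∈ F, S l * S' l

/-- The Kumjian-Pask algebra of `Λ` with coefficients in `R`: an `R`-algebra
`A` together with a generating Kumjian-Pask family `(p,s)` which is universal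
for Kumjian-Pask `Λ`-families, carries a `ℤ^k`-grading with the prescribed
homogeneous components, and in which `r • p_v ≠ 0` for `r ≠ 0`. -/
structure KPAlgebra {k : ℕ} (Λ : KGraph k) (R : Type) [CommRing R]
    (A : Type) [Ring A] [Algebra R A] where
  fam : KPFamily Λ A
  universal : ∀ (B : Type) [Ring B] [Algebra R B] (QT : KPFamily Λ B),
    ∃! φ : A →ₐ[R] B,
      (∀ v, φ (fam.P v) = QT.P v) ∧
      (∀ l, Λ.d l ≠ 0 → φ (fam.S l) = QT.S l) ∧
      (∀ l, Λ.d l ≠ 0 → φ (fam.S' l) = QT.S' l)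
  grading : (Fin k → ℤ) → AddSubgroup A
  grading_mul : ∀ (m n : Fin k → ℤ), ∀ a ∈ grading m, ∀ b ∈ grading n,
    a * b ∈ grading (m + n)
  grading_internal : DirectSum.IsInternal grading
  grading_eq : ∀ n : Fin k → ℤ, (grading n : Set A) =
    ↑(Submodule.span R {x : A | ∃ l m : Λ.E,
      (fun i => (Λ.d l i : ℤ) - (Λ.d m i : ℤ)) = n ∧ x = fam.S l * fam.S' m})
  smul_P_ne_zero : ∀ (v : Λ.V) (c : R), c ≠ 0 → c • fam.P v ≠ 0

/-- A `G`-grading on a ring `A`: additive subgroups with `A_g A_h ⊆ A_{g+h}`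
such that `A` is their internal direct sum. -/
def IsGrading {G A : Type} [AddCommGroup G] [DecidableEq G] [Ring A]
    (gr : G → AddSubgroup A) : Prop :=
  (∀ g h : G, ∀ a ∈ gr g, ∀ b ∈ gr h, a * b ∈ gr (g + h)) ∧
  DirectSum.IsInternal gr

/-- An ideal `I` is graded when every element of `I` is a sum of homogeneous
elements of `I`, i.e. `I = Σ_g (I ∩ A_g)`. -/
def IsGradedIdeal {G A : Type} [Ring A] (gr : G → AddSubgroup A)
    (I : TwoSidedIdeal A) : Prop :=
  ∀ x ∈ I, x ∈ AddSubgroup.closure {y : A | y ∈ I ∧ ∃ g : G, y ∈ gr g}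

/-- An ideal `I` of `KP_R(Λ)` is basic if `c • p_v ∈ I` with `c ≠ 0` implies `p_v ∈ I`. -/
def IsBasic {k : ℕ} {Λ : KGraph k} {R : Type} [CommRing R]
    {A : Type} [Ring A] [Algebra R A] (KP : KPAlgebra Λ R A)
    (I : TwoSidedIdeal A) : Prop :=
  ∀ (c : R) (v : Λ.V), c ≠ 0 → c • KP.fam.P v ∈ I → KP.fam.P v ∈ I

/-- An ideal is idempotent if it is spanned by products `a * b` with `a, b ∈ I`. -/
def IsIdempotentIdeal {A : Type} [Ring A] (I : TwoSidedIdeal A) : Prop :=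
  (I : Set A) ⊆ ↑(AddSubgroup.closure {x : A | ∃ a ∈ I, ∃ b ∈ I, x = a * b})

/-- `RestrCompat Λ H Λ' eV eE` asserts that `Λ'` is (a realization of) the
subgraph `Λ∖H = (Λ^0∖H, {l ∈ Λ : s(l) ∉ H}, r, s)` with the restricted
structure maps, the identifications being given by the equivalences `eV`, `eE`. -/
def RestrCompat {k : ℕ} (Λ : KGraph k) (H : Set Λ.V) (Λ' : KGraph k)
    (eV : Λ'.V ≃ {v : Λ.V // v ∉ H}) (eE : Λ'.E ≃ {l : Λ.E // Λ.s l ∉ H}) : Prop :=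
  (∀ l : Λ'.E, (eV (Λ'.r l)).1 = Λ.r (eE l).1) ∧
  (∀ l : Λ'.E, (eV (Λ'.s l)).1 = Λ.s (eE l).1) ∧
  (∀ l : Λ'.E, Λ'.d l = Λ.d (eE l).1) ∧
  (∀ v : Λ'.V, (eE (Λ'.ident v)).1 = Λ.ident (eV v).1) ∧
  (∀ l m : Λ'.E, Λ'.s l = Λ'.r m →
    (eE (Λ'.comp l m)).1 = Λ.comp (eE l).1 (eE m).1)

/-- `Ind M`: the ideal of `KP_R(Λ)` induced by a set (ideal) `M` of coefficients,
`Ind M = span_R {c • s_a s_{b*} : c ∈ M, a b ∈ Λ}`. -/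
def IndSpan {k : ℕ} {Λ : KGraph k} {R : Type} [CommRing R]
    {A : Type} [Ring A] [Algebra R A] (KP : KPAlgebra Λ R A) (M : Set R) :
    Submodule R A :=
  Submodule.span R {x : A | ∃ c ∈ M, ∃ a b : Λ.E, x = c • (KP.fam.S a * KP.fam.S' b)}

/-- `Res I = {c ∈ R : c • p_v ∈ I for all v ∈ Λ^0}`. -/
def ResSet {k : ℕ} {Λ : KGraph k} {R : Type} [CommRing R]
    {A : Type} [Ring A] [Algebra R A] (KP : KPAlgebra Λ R A) (I : Set A) : Set R :=
  {c : R | ∀ v : Λ.V, c • KP.fam.P v ∈ I}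


namespace KGraph

variable {k : ℕ} (Λ : KGraph k)

lemma s_eq_r_of_d_eq_zero {l : Λ.E} (h : Λ.d l = 0) : Λ.s l = Λ.r l := by
  rw [Λ.eq_ident_of_d_eq_zero l h, Λ.s_ident, Λ.r_ident]

lemma comp_eq_right_of_d_eq_zero {l m : Λ.E} (hl : Λ.d l = 0) (h : Λ.s l = Λ.r m) :
    Λ.comp l m = m := by
  have hr : Λ.r l = Λ.r m := (Λ.s_eq_r_of_d_eq_zero hl).symm.trans h
  rw [Λ.eq_ident_of_d_eq_zero l hl, hr, Λ.ident_comp]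

lemma comp_eq_left_of_d_eq_zero {l m : Λ.E} (hm : Λ.d m = 0) (h : Λ.s l = Λ.r m) :
    Λ.comp l m = l := by
  rw [Λ.eq_ident_of_d_eq_zero m hm, ← h, Λ.comp_ident]

lemma d_eq_sub_of_comp_eq {l m a b : Λ.E} {q : Fin k → ℕ} (ha : Λ.s l = Λ.r a)
    (hb : Λ.s m = Λ.r b) (hda : Λ.d a = q - Λ.d l) (hlq : Λ.d l ≤ q)
    (h : Λ.comp l a = Λ.comp m b) : Λ.d b = q - Λ.d m := by
  refine eq_tsub_of_add_eq ?_
  rw [add_comm, ← Λ.d_comp hb, ← h, Λ.d_comp ha, hda, add_tsub_cancel_of_le hlq]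

variable {Λ}

noncomputable def RowFinite.finset (hrf : Λ.RowFinite) (v : Λ.V) (n : Fin k → ℕ) :
    Finset Λ.E :=
  (hrf v n).toFinset

lemma RowFinite.mem_finset (hrf : Λ.RowFinite) {v : Λ.V} {n : Fin k → ℕ} {l : Λ.E} :
    l ∈ hrf.finset v n ↔ Λ.r l = v ∧ Λ.d l = n :=
  Set.Finite.mem_toFinset _

end KGraph

namespace KPFamily

variable {k : ℕ} {Λ : KGraph k} {A : Type} [Ring A] (QT : KPFamily Λ A)

lemma S_of_d_eq_zero {l : Λ.E} (h : Λ.d l = 0) : QT.S l = QT.P (Λ.r l) := by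
  rw [Λ.eq_ident_of_d_eq_zero l h, QT.S_ident, Λ.r_ident]

lemma S'_of_d_eq_zero {l : Λ.E} (h : Λ.d l = 0) : QT.S' l = QT.P (Λ.r l) := by
  rw [Λ.eq_ident_of_d_eq_zero l h, QT.S'_ident, Λ.r_ident]

lemma P_r_mul_S (l : Λ.E) : QT.P (Λ.r l) * QT.S l = QT.S l := by
  by_cases h : Λ.d l = 0
  · rw [QT.S_of_d_eq_zero h, QT.idem]
  · exact QT.P_mul_S l h

lemma S_mul_P_s (l : Λ.E) : QT.S l * QT.P (Λ.s l) = QT.S l := by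
  by_cases h : Λ.d l = 0
  · rw [QT.S_of_d_eq_zero h, Λ.s_eq_r_of_d_eq_zero h, QT.idem]
  · exact QT.S_mul_P l h

lemma P_s_mul_S' (l : Λ.E) : QT.P (Λ.s l) * QT.S' l = QT.S' l := by
  by_cases h : Λ.d l = 0
  · rw [QT.S'_of_d_eq_zero h, Λ.s_eq_r_of_d_eq_zero h, QT.idem]
  · exact QT.P_mul_S' l h

lemma S'_mul_P_r (l : Λ.E) : QT.S' l * QT.P (Λ.r l) = QT.S' l := by
  by_cases h : Λ.d l = 0
  · rw [QT.S'_of_d_eq_zero h, QT.idem]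
  · exact QT.S'_mul_P l h

lemma S_mul_S {l m : Λ.E} (h : Λ.s l = Λ.r m) : QT.S l * QT.S m = QT.S (Λ.comp l m) := by
  by_cases hl : Λ.d l = 0
  · rw [Λ.comp_eq_right_of_d_eq_zero hl h, QT.S_of_d_eq_zero hl,
      ← Λ.s_eq_r_of_d_eq_zero hl, h, QT.P_r_mul_S]
  by_cases hm : Λ.d m = 0
  · rw [Λ.comp_eq_left_of_d_eq_zero hm h, QT.S_of_d_eq_zero hm, ← h, QT.S_mul_P_s]
  exact QT.mul_S hl hm h

lemma S'_mul_S' {l m : Λ.E} (h : Λ.s l = Λ.r m) :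
    QT.S' m * QT.S' l = QT.S' (Λ.comp l m) := by
  by_cases hl : Λ.d l = 0
  · rw [Λ.comp_eq_right_of_d_eq_zero hl h, QT.S'_of_d_eq_zero hl,
      ← Λ.s_eq_r_of_d_eq_zero hl, h, QT.S'_mul_P_r]
  by_cases hm : Λ.d m = 0
  · rw [Λ.comp_eq_left_of_d_eq_zero hm h, QT.S'_of_d_eq_zero hm, ← h, QT.P_s_mul_S']
  exact QT.mul_S' hl hm h

open Classical in
lemma S'_mul_S {l m : Λ.E} (h : Λ.d l = Λ.d m) :
    QT.S' l * QT.S m = if l = m then QT.P (Λ.s l) else 0 := by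
  by_cases hl : Λ.d l = 0
  · have hm : Λ.d m = 0 := h ▸ hl
    rw [QT.S'_of_d_eq_zero hl, QT.S_of_d_eq_zero hm]
    split_ifs with hlm
    · rw [hlm, QT.idem, Λ.s_eq_r_of_d_eq_zero hm]
    · refine QT.orth _ _ fun hr => hlm ?_
      rw [Λ.eq_ident_of_d_eq_zero l hl, Λ.eq_ident_of_d_eq_zero m hm, hr]
  split_ifs with hlm
  · exact hlm ▸ QT.KP3_eq l hl
  · exact QT.KP3_ne l m hl h hlm

lemma P_eq_sum {v : Λ.V} {n : Fin k → ℕ} {F : Finset Λ.E}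
    (hF : ∀ l : Λ.E, l ∈ F ↔ Λ.r l = v ∧ Λ.d l = n) :
    QT.P v = ∑ l ∈ F, QT.S l * QT.S' l := by
  by_cases hn : n = 0
  · have hFv : F = {Λ.ident v} := by
      ext l
      rw [hF, Finset.mem_singleton, hn]
      constructor
      · rintro ⟨rfl, hl⟩
        exact Λ.eq_ident_of_d_eq_zero l hl
      · rintro rfl
        exact ⟨Λ.r_ident v, Λ.d_ident v⟩
    rw [hFv, Finset.sum_singleton, QT.S_ident, QT.S'_ident, QT.idem]
  · exact QT.KP4 v n hn F hF

open Classical in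
lemma S_mul_S'_mul_S'_mul_S_mul_S_mul_S' {lam mu α β : Λ.E} (hα : Λ.r α = Λ.s lam)
    (hβ : Λ.r β = Λ.s mu) (hd : Λ.d (Λ.comp lam α) = Λ.d (Λ.comp mu β)) :
    QT.S α * QT.S' α * (QT.S' lam * QT.S mu) * (QT.S β * QT.S' β) =
      if Λ.comp lam α = Λ.comp mu β then QT.S α * QT.S' β else 0 := by
  calc QT.S α * QT.S' α * (QT.S' lam * QT.S mu) * (QT.S β * QT.S' β)
      = QT.S α * (QT.S' (Λ.comp lam α) * QT.S (Λ.comp mu β)) * QT.S' β := by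
        rw [← QT.S'_mul_S' hα.symm, ← QT.S_mul_S hβ.symm]
        simp only [mul_assoc]
    _ = _ := by
        rw [QT.S'_mul_S hd]
        split_ifs
        · rw [Λ.s_comp hα.symm, QT.S_mul_P_s]
        · rw [mul_zero, zero_mul]

/-- Inserting `P_{s(λ)} = Σ_α S_α S_{α*}` and `P_{s(μ)} = Σ_β S_β S_{β*}` on both sides of
`S_{λ*} S_μ`, KP3 kills every term with `λα ≠ μβ`. -/
lemma S'_mul_S_eq_sum_of_mem_iff {lam mu : Λ.E} {m n : Fin k → ℕ} {F₁ F₂ : Finset Λ.E}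
    {F : Finset (Λ.E × Λ.E)}
    (hF₁ : ∀ α : Λ.E, α ∈ F₁ ↔ Λ.r α = Λ.s lam ∧ Λ.d α = m)
    (hF₂ : ∀ β : Λ.E, β ∈ F₂ ↔ Λ.r β = Λ.s mu ∧ Λ.d β = n)
    (hmn : Λ.d lam + m = Λ.d mu + n)
    (hF : ∀ p : Λ.E × Λ.E, p ∈ F ↔ p.1 ∈ F₁ ∧ p.2 ∈ F₂ ∧ Λ.comp lam p.1 = Λ.comp mu p.2) :
    QT.S' lam * QT.S mu = ∑ p ∈ F, QT.S p.1 * QT.S' p.2 := by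
  classical
  have hFfilter : F = (F₁ ×ˢ F₂).filter fun p => Λ.comp lam p.1 = Λ.comp mu p.2 := by
    ext p
    rw [hF, Finset.mem_filter, Finset.mem_product, and_assoc]
  calc QT.S' lam * QT.S mu = QT.P (Λ.s lam) * (QT.S' lam * QT.S mu) * QT.P (Λ.s mu) := by
        rw [mul_assoc, mul_assoc, QT.S_mul_P_s, ← mul_assoc, QT.P_s_mul_S']
    _ = ∑ α ∈ F₁, ∑ β ∈ F₂, QT.S α * QT.S' α * (QT.S' lam * QT.S mu) * (QT.S β * QT.S' β) := by
        rw [QT.P_eq_sum hF₁, QT.P_eq_sum hF₂]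
        rw [Finset.sum_mul, Finset.sum_mul]
        simp only [Finset.mul_sum]
    _ = ∑ α ∈ F₁, ∑ β ∈ F₂,
          if Λ.comp lam α = Λ.comp mu β then QT.S α * QT.S' β else 0 := by
        refine Finset.sum_congr rfl fun α hα => Finset.sum_congr rfl fun β hβ => ?_
        obtain ⟨hαr, hαd⟩ := (hF₁ α).1 hα
        obtain ⟨hβr, hβd⟩ := (hF₂ β).1 hβ
        refine QT.S_mul_S'_mul_S'_mul_S_mul_S_mul_S' hαr hβr ?_
        rw [Λ.d_comp hαr.symm, Λ.d_comp hβr.symm, hαd, hβd, hmn]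
    _ = ∑ p ∈ F, QT.S p.1 * QT.S' p.2 := by
        rw [hFfilter, Finset.sum_filter, Finset.sum_product]

end KPFamily

theorem S'_mul_S_eq_sum_general (k : ℕ) (Λ : KGraph k)
    (hrf : Λ.RowFinite)
    (A : Type) [Ring A]
    (QT : KPFamily Λ A) (lam mu : Λ.E) (q : Fin k → ℕ)
    (hq : Λ.d lam ⊔ Λ.d mu ≤ q)
    (F : Finset (Λ.E × Λ.E))
    (hF : ∀ p : Λ.E × Λ.E, p ∈ F ↔
      Λ.r p.1 = Λ.s lam ∧ Λ.r p.2 = Λ.s mu ∧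
      Λ.d p.1 = q - Λ.d lam ∧ Λ.comp lam p.1 = Λ.comp mu p.2) :
    QT.S' lam * QT.S mu = ∑ p ∈ F, QT.S p.1 * QT.S' p.2 := by
  have hlq : Λ.d lam ≤ q := le_sup_left.trans hq
  have hmq : Λ.d mu ≤ q := le_sup_right.trans hq
  refine QT.S'_mul_S_eq_sum_of_mem_iff (fun _ => hrf.mem_finset) (fun _ => hrf.mem_finset)
    (by rw [add_tsub_cancel_of_le hlq, add_tsub_cancel_of_le hmq]) fun p => ?_
  rw [hF, hrf.mem_finset, hrf.mem_finset]
  constructor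
  · rintro ⟨hα, hβ, hαd, hcomp⟩
    exact ⟨⟨hα, hαd⟩, ⟨hβ, Λ.d_eq_sub_of_comp_eq hα.symm hβ.symm hαd hlq hcomp⟩, hcomp⟩
  · rintro ⟨⟨hα, hαd⟩, ⟨hβ, -⟩, hcomp⟩
    exact ⟨hα, hβ, hαd, hcomp⟩

/-- **Lemma 3.3.**  If `(P,S)` is a Kumjian-Pask `Λ`-family and `l, m ∈ Λ`,
then for every `q ≥ d(l) ∨ d(m)` we have
`S_{l*} S_m = Σ_{d(lα) = q, lα = mβ} S_α S_{β*}`. -/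
theorem S'_mul_S_eq_sum (k : ℕ) (hk : 0 < k) (Λ : KGraph k)
    (hrf : Λ.RowFinite) (hns : Λ.NoSources)
    (R : Type) [CommRing R] (A : Type) [Ring A] [Algebra R A]
    (QT : KPFamily Λ A) (lam mu : Λ.E) (q : Fin k → ℕ)
    (hq : Λ.d lam ⊔ Λ.d mu ≤ q)
    (F : Finset (Λ.E × Λ.E))
    (hF : ∀ p : Λ.E × Λ.E, p ∈ F ↔
      Λ.r p.1 = Λ.s lam ∧ Λ.r p.2 = Λ.s mu ∧
      Λ.d p.1 = q - Λ.d lam ∧ Λ.comp lam p.1 = Λ.comp mu p.2) :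
    QT.S' lam * QT.S mu = ∑ p ∈ F, QT.S p.1 * QT.S' p.2 :=
  S'_mul_S_eq_sum_general k Λ hrf A QT lam mu q hq F hF

end KP
end

section
/- Let E be a directed graph with no sources. Then E is aperiodic if and only if every cycle in E has an entry. -/
namespace KP

/-- A directed graph. -/
structure DirGraph where
  V : Type
  Edge : Type
  r : Edge → V
  s : Edge → V

namespace DirGraph

/-- A list of edges `l = [l_1, …, l_N]` is a path when consecutive edges are
composable: `s(l_i) = r(l_{i+1})`. -/
def IsPath (E : DirGraph) (l : List E.Edge) : Prop :=
  l.Chain' fun a b => E.s a = E.r b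

/-- The vertex sitting at position `i` along a path `l` with range `v`: it is
`v` when `i = 0` and the source of the `i`-th edge otherwise. -/
def vtxAt (E : DirGraph) (l : List E.Edge) (v : E.V) (i : ℕ) : E.V :=
  match (l.take i).getLast? with
  | some e => E.s e
  | none => v

/-- `E` has no sources: every vertex receives at least one edge. -/
def NoSources (E : DirGraph) : Prop := ∀ v : E.V, ∃ e : E.Edge, E.r e = v

/-- `E` is aperiodic: for every vertex `v` and all `m < n` there is a path `l`
with range `v`, `|l| ≥ n`, such that the subpath `l_{m+1} ⋯ l_{m+|l|-n}`
differs from the subpath `l_{n+1} ⋯ l_{|l|}` (when `|l| = n` these are paths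
of length `0`, identified with the vertices at which they sit). -/
def Aperiodic (E : DirGraph) : Prop :=
  ∀ (v : E.V) (m n : ℕ), m < n →
    ∃ l : List E.Edge, E.IsPath l ∧ n ≤ l.length ∧
      l.head?.map E.r = some v ∧
      (if l.length = n then E.vtxAt l v m ≠ E.vtxAt l v n
       else (l.drop m).take (l.length - n) ≠ l.drop n)

/-- A cycle: a path of length at least `1` whose range equals its source. -/
def IsCycle (E : DirGraph) (l : List E.Edge) : Prop :=
  E.IsPath l ∧ l ≠ [] ∧ l.head?.map E.r = l.getLast?.map E.s

/-- An entry of the cycle `l`: an edge `e ≠ l_i` with `r(e) = r(l_i)` for some `i`. -/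
def HasEntry (E : DirGraph) (l : List E.Edge) : Prop :=
  ∃ (i : ℕ) (h : i < l.length) (e : E.Edge),
    E.r e = E.r (l.get ⟨i, h⟩) ∧ e ≠ l.get ⟨i, h⟩

end DirGraph

/-!
If a cycle has no entry, every path starting on it can only wind around it, so shifting such a
path by the length of the cycle changes nothing, against aperiodicity. Conversely, take a path of
length `n` (it exists since there are no sources). If its vertices at positions `m` and `n`
differ we are done; otherwise the segment between them is a cycle, and running once more along
it from position `n` but leaving through an entry gives a path whose shifts by `m` and by `n`
disagree in the last edge.
-/

namespace DirGraph

variable {E : DirGraph} {l p : List E.Edge} {v : E.V}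

lemma vtxAt_add_one (l : List E.Edge) (v : E.V) {j : ℕ} (h : j < l.length) :
    E.vtxAt l v (j + 1) = E.s l[j] := by
  simp [vtxAt, List.getLast?_eq_getElem?, Nat.min_eq_left h]

lemma IsPath.s_getElem (hl : E.IsPath l) {j : ℕ} (h : j + 1 < l.length) :
    E.s l[j] = E.r l[j + 1] :=
  List.isChain_iff_getElem.1 hl j h

lemma IsPath.r_getElem (hl : E.IsPath l) (hv : l.head?.map E.r = some v) {j : ℕ}
    (h : j < l.length) : E.r l[j] = E.vtxAt l v j := by
  cases j with
  | zero => simpa [vtxAt, List.head?_eq_getElem?, List.getElem?_eq_getElem h] using hv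
  | succ j => rw [vtxAt_add_one _ _ (by omega), hl.s_getElem h]

lemma NoSources.exists_isPath_length_add_one (hns : E.NoSources) (v : E.V) (n : ℕ) :
    ∃ l : List E.Edge, E.IsPath l ∧ l.length = n + 1 ∧ l.head?.map E.r = some v := by
  induction n generalizing v with
  | zero =>
    obtain ⟨e, he⟩ := hns v
    exact ⟨[e], List.isChain_singleton e, rfl, by simp [he]⟩
  | succ n ih =>
    obtain ⟨e, he⟩ := hns v
    obtain ⟨l, hl, hlen, hhead⟩ := ih (E.s e)
    refine ⟨e :: l, List.isChain_cons.2 ⟨fun y hy => ?_, hl⟩, by simp [hlen], by simp [he]⟩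
    rw [hy] at hhead
    exact (Option.some_injective _ hhead).symm

lemma IsCycle.length_pos (hl : E.IsCycle l) : 0 < l.length :=
  List.length_pos_iff.2 hl.2.1

lemma IsCycle.s_getElem (hl : E.IsCycle l) {i : ℕ} (h : i < l.length) :
    E.s l[i] = E.r (l[(i + 1) % l.length]'(Nat.mod_lt _ hl.length_pos)) := by
  obtain ⟨hp, -, hrs⟩ := hl
  rcases Nat.lt_or_ge (i + 1) l.length with hi | hi
  · simp only [Nat.mod_eq_of_lt hi, hp.s_getElem hi]
  · obtain rfl : i = l.length - 1 := by omega
    simp only [Nat.sub_add_cancel (Nat.one_le_of_lt h), Nat.mod_self]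
    simpa [List.head?_eq_getElem?, List.getLast?_eq_getElem?, List.getElem?_eq_getElem h,
      List.getElem?_eq_getElem (Nat.zero_lt_of_lt h)] using hrs.symm

lemma IsCycle.vtxAt_length (hl : E.IsCycle l) (hv : l.head?.map E.r = some v) :
    E.vtxAt l v l.length = v := by
  obtain ⟨-, hne, hrs⟩ := hl
  obtain ⟨e, he⟩ := Option.ne_none_iff_exists'.1 (mt List.getLast?_eq_none_iff.1 hne)
  rw [hv, he] at hrs
  simp [vtxAt, he, Option.some_injective _ hrs]

lemma IsCycle.getElem_eq_getElem_mod (hl : E.IsCycle l) (hne : ¬ E.HasEntry l)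
    (hp : E.IsPath p) (hhead : p.head?.map E.r = l.head?.map E.r) :
    ∀ j (hj : j < p.length), p[j] = l[j % l.length]'(Nat.mod_lt _ hl.length_pos) := by
  have follow : ∀ (i : ℕ) (hi : i < l.length) (e : E.Edge), E.r e = E.r l[i] → e = l[i] := by
    simpa [HasEntry] using hne
  intro j hj
  induction j with
  | zero =>
    refine follow 0 hl.length_pos _ ?_
    simpa [List.head?_eq_getElem?, List.getElem?_eq_getElem hj,
      List.getElem?_eq_getElem hl.length_pos] using hhead
  | succ j ih =>
    refine follow _ (Nat.mod_lt _ hl.length_pos) _ ?_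
    rw [← hp.s_getElem hj, ih (by omega), hl.s_getElem]
    simp only [Nat.mod_add_mod]

lemma IsCycle.isPath_append (hp : E.IsPath p) (hl : E.IsCycle l)
    (hlast : p.getLast?.map E.s = l.getLast?.map E.s) : E.IsPath (p ++ l) := by
  refine List.isChain_append.2 ⟨hp, hl.1, fun x hx y hy => ?_⟩
  have := hlast.trans hl.2.2.symm
  rw [hx, hy] at this
  exact Option.some_injective _ this

lemma IsPath.isCycle_drop (hp : E.IsPath l) (hv : l.head?.map E.r = some v) {m : ℕ}
    (hm : m < l.length) (hloop : E.vtxAt l v m = E.vtxAt l v l.length) :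
    E.IsCycle (l.drop m) := by
  refine ⟨hp.drop m, by simp; omega, ?_⟩
  have hlast := vtxAt_add_one l v (j := l.length - 1) (by omega)
  rw [Nat.sub_add_cancel (by omega)] at hlast
  rw [List.head?_drop, List.getElem?_eq_getElem hm, List.getLast?_drop, if_neg (Nat.not_le.2 hm),
    List.getLast?_eq_getElem?, List.getElem?_eq_getElem (by omega)]
  simp only [Option.map_some, hp.r_getElem hv hm, hloop, hlast]

lemma IsPath.take_append_singleton (hp : E.IsPath l) {i : ℕ} (hi : i < l.length)
    {e : E.Edge} (he : E.r e = E.r l[i]) : E.IsPath (l.take i ++ [e]) := by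
  have hprefix : E.IsPath (l.take i ++ [l[i]]) := List.take_succ_eq_append_getElem hi ▸ hp.take _
  obtain ⟨htake, -, hjoin⟩ := List.isChain_append.1 hprefix
  refine List.isChain_append.2 ⟨htake, List.isChain_singleton e, fun x hx y hy => ?_⟩
  obtain rfl : y = e := by simpa using hy.symm
  exact (hjoin x hx _ rfl).trans he.symm

theorem Aperiodic.hasEntry (hap : E.Aperiodic) (hl : E.IsCycle l) : E.HasEntry l := by
  by_contra hne
  have hN := hl.length_pos
  obtain ⟨v, hv⟩ : ∃ v, l.head?.map E.r = some v :=
    ⟨E.r l[0], by simp [List.head?_eq_getElem?, List.getElem?_eq_getElem hN]⟩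
  obtain ⟨p, hp, hNp, hpv, hdiff⟩ := hap v 0 l.length hN
  have hwind := hl.getElem_eq_getElem_mod hne hp (hpv.trans hv.symm)
  split_ifs at hdiff with hlen
  · obtain rfl : p = l := List.ext_getElem hlen fun j hj _ => by
      simp only [hwind j hj, Nat.mod_eq_of_lt (hlen ▸ hj)]
    exact hdiff (hl.vtxAt_length hv).symm
  · refine hdiff (List.ext_getElem (by simp) fun j _ _ => ?_)
    simp only [List.drop_zero, List.getElem_take, List.getElem_drop, hwind, Nat.add_mod_left]

theorem NoSources.aperiodic_of_forall_hasEntry (hns : E.NoSources)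
    (hent : ∀ l : List E.Edge, E.IsCycle l → E.HasEntry l) : E.Aperiodic := by
  intro v m n hmn
  obtain ⟨p, hp, hlen, hv⟩ := hns.exists_isPath_length_add_one v (n - 1)
  rw [Nat.sub_add_cancel (by omega)] at hlen
  by_cases hloop : E.vtxAt p v m = E.vtxAt p v n
  swap
  · exact ⟨p, hp, hlen.ge, hv, by rwa [if_pos hlen]⟩
  have hc := hp.isCycle_drop hv (m := m) (by omega) (hlen ▸ hloop)
  obtain ⟨i, hi, e, hre, hne⟩ := hent _ hc
  simp only [List.get_eq_getElem, List.getElem_drop, List.length_drop] at hi hre hne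
  have hpath : E.IsPath (p ++ ((p.drop m).take i ++ [e])) := by
    have hloop' : E.IsPath (p ++ p.drop m) :=
      hc.isPath_append hp (by simp [List.getLast?_drop, Nat.not_le.2 (show m < p.length by omega)])
    have := hloop'.take_append_singleton (i := p.length + i) (by simp; omega) (e := e)
      (by rw [List.getElem_append_right (by omega)]; simpa using hre)
    rwa [List.take_length_add_append, List.append_assoc] at this
  have hhead : (p ++ ((p.drop m).take i ++ [e])).head?.map E.r = some v := by
    rwa [List.head?_append_of_ne_nil _ (List.ne_nil_of_length_pos (by omega))]
  refine ⟨_, hpath, by simp; omega, hhead, ?_⟩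
  rw [if_neg (by simp; omega)]
  intro heq
  have hlenL : (p ++ ((p.drop m).take i ++ [e])).length - n = i + 1 := by simp; omega
  rw [hlenL, List.drop_left' hlen, List.drop_append_of_le_length (by omega),
    List.take_append_of_le_length (by simp; omega),
    List.take_succ_eq_append_getElem (by simp; omega), List.getElem_drop] at heq
  exact hne (List.singleton_inj.1 (List.append_cancel_left heq)).symm

end DirGraph

/-- **Lemma 4.4.**  A directed graph without sources is aperiodic if and only
if every cycle has an entry. -/
theorem dirGraph_aperiodic_iff_every_cycle_hasEntry (E : DirGraph)
    (hns : E.NoSources) :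
    E.Aperiodic ↔ ∀ l : List E.Edge, E.IsCycle l → E.HasEntry l :=
  ⟨fun hap _ hl => hap.hasEntry hl, hns.aperiodic_of_forall_hasEntry⟩

end KP
end

section
/- Let k be a positive integer and Λ a row-finite k-graph without sources. If Λ is cofinal, then the only saturated hereditary subsets of Λ^0 are ∅ and Λ^0. -/
namespace KP

/-! Suppose `w ∈ H` and `v ∉ H`. By saturation every vertex outside `H` emits a path of degree
`(1, …, 1)` whose source is outside `H`; concatenating such paths from `v` gives paths of degree
`(j, …, j)`, each extending the previous one, whose segments assemble into an infinite path `x`.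
Every `x(n)` lies outside `H`, since `x(n)` is joined to the source of a path in the chain,
which is outside `H`, and `H` is hereditary. Cofinality joins `w` to some `x(n)`, so heredity
forces `x(n) ∈ H`. -/

namespace KGraph

variable {k : ℕ} {Λ : KGraph k}

lemma eq_and_eq_of_comp_eq {a b a' b' : Λ.E} (hab : Λ.s a = Λ.r b) (hab' : Λ.s a' = Λ.r b')
    (h : Λ.comp a b = Λ.comp a' b') (hd : Λ.d a = Λ.d a') : a = a' ∧ b = b' := by
  obtain ⟨_, -, huniq⟩ := Λ.factor (Λ.comp a b) (Λ.d a) (Λ.d b) (Λ.d_comp hab)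
  have hd' : Λ.d b' = Λ.d b := by
    apply add_left_cancel (a := Λ.d a)
    rw [← Λ.d_comp hab, h, Λ.d_comp hab', hd]
  exact Prod.ext_iff.mp <|
    (huniq (a, b) ⟨rfl, rfl, hab, rfl⟩).trans (huniq (a', b') ⟨hd.symm, hd', hab', h.symm⟩).symm

lemma exists_comp_comp_eq (l : Λ.E) {p q : Fin k → ℕ} (hpq : p ≤ q) (hq : q ≤ Λ.d l) :
    ∃ a b c : Λ.E, Λ.d a = p ∧ Λ.d b = q - p ∧ Λ.d c = Λ.d l - q ∧
      Λ.s a = Λ.r b ∧ Λ.s b = Λ.r c ∧ Λ.comp a (Λ.comp b c) = l := by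
  obtain ⟨⟨a, bc⟩, ⟨hda, hdbc, habc, hl⟩, -⟩ :=
    Λ.factor l p (Λ.d l - p) (add_tsub_cancel_of_le (hpq.trans hq)).symm
  obtain ⟨⟨b, c⟩, ⟨hdb, hdc, hbc, rfl⟩, -⟩ :=
    Λ.factor bc (q - p) (Λ.d l - q) (by rw [hdbc, add_comm, tsub_add_tsub_cancel hq hpq])
  exact ⟨a, b, c, hda, hdb, hdc, habc.trans (Λ.r_comp hbc), hbc, hl⟩

lemma seg_eq {l a b c : Λ.E} {p q : Fin k → ℕ} (hda : Λ.d a = p) (hdb : Λ.d b = q - p)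
    (hab : Λ.s a = Λ.r b) (hbc : Λ.s b = Λ.r c) (h : Λ.comp a (Λ.comp b c) = l) :
    Λ.seg l p q = b := by
  have hex : ∃ t : Λ.E × Λ.E × Λ.E, Λ.d t.1 = p ∧ Λ.d t.2.1 = q - p ∧
      Λ.s t.1 = Λ.r t.2.1 ∧ Λ.s t.2.1 = Λ.r t.2.2 ∧
      Λ.comp t.1 (Λ.comp t.2.1 t.2.2) = l := ⟨(a, b, c), hda, hdb, hab, hbc, h⟩
  rw [seg, dif_pos hex]
  obtain ⟨hda', hdb', hab', hbc', h'⟩ := Classical.choose_spec hex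
  have hbc_r := (Λ.r_comp hbc).trans hab.symm
  have hbc_r' := (Λ.r_comp hbc').trans hab'.symm
  obtain ⟨-, hbc_eq⟩ := eq_and_eq_of_comp_eq hbc_r'.symm hbc_r.symm (h'.trans h.symm)
    (hda'.trans hda.symm)
  exact (eq_and_eq_of_comp_eq hbc' hbc hbc_eq (hdb'.trans hdb.symm)).1

lemma d_seg {l : Λ.E} {p q : Fin k → ℕ} (hpq : p ≤ q) (hq : q ≤ Λ.d l) :
    Λ.d (Λ.seg l p q) = q - p := by
  obtain ⟨a, b, c, hda, hdb, -, hab, hbc, h⟩ := exists_comp_comp_eq l hpq hq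
  rw [seg_eq hda hdb hab hbc h, hdb]

lemma seg_comp_seg {l : Λ.E} {p q u : Fin k → ℕ} (hpq : p ≤ q) (hqu : q ≤ u) (hu : u ≤ Λ.d l) :
    Λ.s (Λ.seg l p q) = Λ.r (Λ.seg l q u) ∧
      Λ.comp (Λ.seg l p q) (Λ.seg l q u) = Λ.seg l p u := by
  obtain ⟨a, b, ce, hda, hdb, hdce, hab, hbce, hl⟩ := exists_comp_comp_eq l hpq (hqu.trans hu)
  obtain ⟨⟨c, e⟩, ⟨hdc, -, hce, rfl⟩, -⟩ :=
    Λ.factor ce (u - q) (Λ.d l - u) (by rw [hdce, add_comm, tsub_add_tsub_cancel hu hqu])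
  have hbc : Λ.s b = Λ.r c := hbce.trans (Λ.r_comp hce)
  have hseg_pq : Λ.seg l p q = b := seg_eq hda hdb hab hbce hl
  have hseg_qu : Λ.seg l q u = c := by
    refine seg_eq (a := Λ.comp a b) ?_ hdc ((Λ.s_comp hab).trans hbc) hce
      ((Λ.comp_assoc hab hbce).trans hl)
    rw [Λ.d_comp hab, hda, hdb, add_tsub_cancel_of_le hpq]
  have hseg_pu : Λ.seg l p u = Λ.comp b c := by
    refine seg_eq hda ?_ (hab.trans (Λ.r_comp hbc).symm) ((Λ.s_comp hbc).trans hce)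
      ((Λ.comp_assoc hbc hce).symm ▸ hl)
    rw [Λ.d_comp hbc, hdb, hdc, add_comm, tsub_add_tsub_cancel hqu hpq]
  rw [hseg_pq, hseg_qu, hseg_pu]
  exact ⟨hbc, rfl⟩

lemma seg_comp_right {l t : Λ.E} {p q : Fin k → ℕ} (hpq : p ≤ q) (hq : q ≤ Λ.d l)
    (hlt : Λ.s l = Λ.r t) : Λ.seg (Λ.comp l t) p q = Λ.seg l p q := by
  obtain ⟨a, b, c, hda, hdb, -, hab, hbc, rfl⟩ := exists_comp_comp_eq l hpq hq
  have hct : Λ.s c = Λ.r t := by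
    rwa [Λ.s_comp (hab.trans (Λ.r_comp hbc).symm), Λ.s_comp hbc] at hlt
  rw [seg_eq hda hdb hab hbc rfl, Λ.comp_assoc (hab.trans (Λ.r_comp hbc).symm)
    ((Λ.s_comp hbc).trans hct), Λ.comp_assoc hbc hct]
  exact seg_eq hda hdb hab (hbc.trans (Λ.r_comp hct).symm) rfl

lemma HereditarySet.s_mem_of_r_seg_mem {H : Set Λ.V} (hH : Λ.HereditarySet H) {l : Λ.E}
    {p q : Fin k → ℕ} (hpq : p ≤ q) (hq : q ≤ Λ.d l) (hmem : Λ.r (Λ.seg l p q) ∈ H) :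
    Λ.s l ∈ H := by
  obtain ⟨a, b, c, hda, hdb, -, hab, hbc, rfl⟩ := exists_comp_comp_eq l hpq hq
  rw [seg_eq hda hdb hab hbc rfl] at hmem
  rw [Λ.s_comp (hab.trans (Λ.r_comp hbc).symm), Λ.s_comp hbc]
  exact hH c (hbc ▸ hH b hmem)

lemma SaturatedSet.exists_s_not_mem {H : Set Λ.V} (hH : Λ.SaturatedSet H) {v : Λ.V}
    (hv : v ∉ H) (n : Fin k → ℕ) : ∃ l : Λ.E, Λ.r l = v ∧ Λ.d l = n ∧ Λ.s l ∉ H := by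
  by_contra! h
  exact hv (hH v n h)

structure IsDiagonalChain (Λ : KGraph k) (g : ℕ → Λ.E) : Prop where
  d_eq : ∀ j, Λ.d (g j) = fun _ => j
  exists_comp_eq : ∀ j, ∃ t, Λ.s (g j) = Λ.r t ∧ g (j + 1) = Λ.comp (g j) t

lemma exists_isDiagonalChain_s_mem {S : Set Λ.V}
    (hS : ∀ v ∈ S, ∃ l : Λ.E, Λ.r l = v ∧ Λ.d l = 1 ∧ Λ.s l ∈ S) {v : Λ.V} (hv : v ∈ S) :
    ∃ g : ℕ → Λ.E, Λ.IsDiagonalChain g ∧ ∀ j, Λ.s (g j) ∈ S := by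
  have : Nonempty Λ.E := ⟨Λ.ident v⟩
  choose! f hfr hfd hfs using hS
  let g : ℕ → Λ.E := fun j => Nat.rec (Λ.ident v) (fun _ l => Λ.comp l (f (Λ.s l))) j
  have hg : ∀ j, Λ.s (g j) ∈ S ∧ Λ.d (g j) = fun _ => j := by
    intro j
    induction j with
    | zero => exact ⟨(Λ.s_ident v).symm ▸ hv, Λ.d_ident v⟩
    | succ j ih =>
      have hj : Λ.s (g j) = Λ.r (f (Λ.s (g j))) := (hfr _ ih.1).symm
      refine ⟨(Λ.s_comp hj).symm ▸ hfs _ ih.1, ?_⟩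
      change Λ.d (Λ.comp (g j) _) = _
      rw [Λ.d_comp hj, ih.2, hfd _ ih.1]
      funext
      simp
  exact ⟨g, ⟨fun j => (hg j).2, fun j => ⟨_, (hfr _ (hg j).1).symm, rfl⟩⟩, fun j => (hg j).1⟩

namespace IsDiagonalChain

variable {g : ℕ → Λ.E} (hg : Λ.IsDiagonalChain g)
include hg

lemma le_d_univ_sup (q : Fin k → ℕ) : q ≤ Λ.d (g (Finset.univ.sup q)) :=
  hg.d_eq _ ▸ fun i => Finset.le_sup (Finset.mem_univ i)

lemma seg_eq_of_le {p q : Fin k → ℕ} {N M : ℕ} (hpq : p ≤ q) (hq : q ≤ Λ.d (g N))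
    (hNM : N ≤ M) : Λ.seg (g M) p q = Λ.seg (g N) p q := by
  induction M, hNM using Nat.le_induction with
  | base => rfl
  | succ M hNM ih =>
    obtain ⟨t, hgt, hg_succ⟩ := hg.exists_comp_eq M
    have hqM : q ≤ Λ.d (g M) := by
      rw [hg.d_eq] at hq ⊢
      exact fun i => (hq i).trans hNM
    rw [hg_succ, seg_comp_right hpq hqM hgt, ih]

end IsDiagonalChain

end KGraph

open KGraph

variable {k : ℕ} {Λ : KGraph k}

noncomputable def InfPath.ofDiagonalChain {g : ℕ → Λ.E} (hg : Λ.IsDiagonalChain g) :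
    InfPath Λ where
  f p q := Λ.seg (g (Finset.univ.sup q)) p q
  deg _ q hpq := d_seg hpq (hg.le_d_univ_sup q)
  compat _ q u hpq hqu := by
    rw [← hg.seg_eq_of_le hpq (hg.le_d_univ_sup q) (Finset.sup_mono_fun fun i _ => hqu i)]
    exact (seg_comp_seg hpq hqu (hg.le_d_univ_sup u)).1
  comp_f _ q u hpq hqu := by
    rw [← hg.seg_eq_of_le hpq (hg.le_d_univ_sup q) (Finset.sup_mono_fun fun i _ => hqu i)]
    exact (seg_comp_seg hpq hqu (hg.le_d_univ_sup u)).2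

lemma KGraph.HereditarySet.exists_s_mem_of_vtx_mem {H : Set Λ.V} (hH : Λ.HereditarySet H)
    {g : ℕ → Λ.E} (hg : Λ.IsDiagonalChain g) {n : Fin k → ℕ}
    (hn : (InfPath.ofDiagonalChain hg).vtx n ∈ H) : ∃ j, Λ.s (g j) ∈ H :=
  ⟨_, hH.s_mem_of_r_seg_mem le_rfl (hg.le_d_univ_sup n) hn⟩

theorem saturated_hereditary_trivial_of_cofinal_general (k : ℕ)
    (Λ : KGraph k)
    (hcof : Λ.Cofinal) (H : Set Λ.V)
    (hher : Λ.HereditarySet H) (hsat : Λ.SaturatedSet H) :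
    H = ∅ ∨ H = Set.univ := by
  rw [or_iff_not_imp_left, ← Ne, ← Set.nonempty_iff_ne_empty, Set.eq_univ_iff_forall]
  rintro ⟨w, hw⟩ v
  by_contra hv
  obtain ⟨g, hg, hgH⟩ :=
    exists_isDiagonalChain_s_mem (S := Hᶜ) (fun _ hu => hsat.exists_s_not_mem hu 1) hv
  obtain ⟨n, l, rfl, hl⟩ := hcof (InfPath.ofDiagonalChain hg) w
  obtain ⟨j, hj⟩ := hher.exists_s_mem_of_vtx_mem hg (hl ▸ hher l hw)
  exact hgH j hj

/-- **Lemma 5.11.**  If `Λ` is cofinal then the only saturated hereditary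
subsets of `Λ^0` are `∅` and `Λ^0`. -/
theorem saturated_hereditary_trivial_of_cofinal (k : ℕ) (hk : 0 < k)
    (Λ : KGraph k) (hrf : Λ.RowFinite) (hns : Λ.NoSources)
    (hcof : Λ.Cofinal) (H : Set Λ.V)
    (hher : Λ.HereditarySet H) (hsat : Λ.SaturatedSet H) :
    H = ∅ ∨ H = Set.univ :=
  saturated_hereditary_trivial_of_cofinal_general k Λ hcof H hher hsat

end KP
end
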